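/- arXiv:2006.14466 — 4 statements merged into one kernel-verified Lean document; each statement's English description precedes it below -/
import Mathlib

section
/- Let q be a prime power and F_q the finite field with q elements. Let G be the bipartite graph whose vertex set is the disjoint union of a set of points P = F_q × F_q and a set of lines L = F_q × F_q, and in which a point (x,y) ∈ P is adjacent to a line (m,b) ∈ L if and only if y = m·x + b. Then G contains no subgraph isomorphic to the cycle C₄ of length 4; equivalently, any two distinct lines (m₁,b₁) ≠ (m₂,b₂) have at most one common neighbor in G. -/
/-- `G` contains a copy of `H`, i.e. a subgraph isomorphic to `H`. -/
def SimpleGraph.ContainsCopy {α β : Type*} (G : SimpleGraph α) (H : SimpleGraph β) : Prop :=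
  ∃ f : β → α, Function.Injective f ∧ ∀ ⦃a b : β⦄, H.Adj a b → G.Adj (f a) (f b)

/-- `G` is an `(n,k)`-graph: its vertex set is the pairwise disjoint union of `n` nonempty
parts, each of size at most `k`, and between any two distinct parts there is exactly one
edge of `G` with one endpoint in each part. -/
def SimpleGraph.IsNKGraph {V : Type*} (G : SimpleGraph V) (n k : ℕ) : Prop :=
  ∃ P : Fin n → Finset V,
    (∀ i, (P i).Nonempty) ∧
    (∀ i, (P i).card ≤ k) ∧
    (∀ v : V, ∃! i, v ∈ P i) ∧
    (∀ i j, i ≠ j → ∃! e : V × V, e.1 ∈ P i ∧ e.2 ∈ P j ∧ G.Adj e.1 e.2)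

/-- There is an `(n,k)`-graph containing no subgraph isomorphic to `H`. -/
def ExistsNKGraphFree (n k : ℕ) {β : Type*} (H : SimpleGraph β) : Prop :=
  ∃ (N : ℕ) (G : SimpleGraph (Fin N)), G.IsNKGraph n k ∧ ¬ G.ContainsCopy H

/-- The split function `f(n,H)`: the least `k` such that some `(n,k)`-graph is `H`-free. -/
noncomputable def splitNumber (n : ℕ) {β : Type*} (H : SimpleGraph β) : ℕ :=
  sInf {k : ℕ | ExistsNKGraphFree n k H}

/-- The Turán (extremal) number `ex(ℓ,H)`: the maximum number of edges in a simple graph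
on `ℓ` vertices containing no subgraph isomorphic to `H`. -/
noncomputable def exNumber (ℓ : ℕ) {β : Type*} (H : SimpleGraph β) : ℕ :=
  sSup {m : ℕ | ∃ G : SimpleGraph (Fin ℓ), ¬ G.ContainsCopy H ∧ G.edgeSet.ncard = m}

/-- The point–line incidence graph of the classical affine plane over a field `F`:
points `Sum.inl (x,y)` and lines `Sum.inr (m,b)` (the line `y = m·x + b`), with a point
adjacent to a line iff the point lies on the line. -/
def affinePlaneGraph (F : Type*) [Field F] : SimpleGraph ((F × F) ⊕ (F × F)) :=
  SimpleGraph.fromRel (fun u v =>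
    match u, v with
    | Sum.inl (x, y), Sum.inr (m, b) => y = m * x + b
    | _, _ => False)


lemma adj_cases {F : Type*} [Field F] {u v : (F × F) ⊕ (F × F)}
    (h : (affinePlaneGraph F).Adj u v) :
    (∃ p L : F × F, ((u = .inl p ∧ v = .inr L) ∨ (u = .inr L ∧ v = .inl p)) ∧
      p.2 = L.1 * p.1 + L.2) := by
  obtain ⟨hne, h | h⟩ := h
  · rcases u with ⟨x,y⟩|⟨m,b⟩ <;> rcases v with ⟨x',y'⟩|⟨m',b'⟩ <;> simp_all
  · rcases u with ⟨x,y⟩|⟨m,b⟩ <;> rcases v with ⟨x',y'⟩|⟨m',b'⟩ <;> simp_all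

/-- The affine plane point–line incidence graph over a finite field contains
no copy of `C₄`; equivalently, any two distinct lines have at most one common neighbor. -/
theorem affinePlaneGraph_C4_free (F : Type*) [Field F] [Fintype F] :
    ¬ (affinePlaneGraph F).ContainsCopy (SimpleGraph.cycleGraph 4) ∧
    ∀ L₁ L₂ : F × F, L₁ ≠ L₂ →
      {v : (F × F) ⊕ (F × F) |
        (affinePlaneGraph F).Adj v (Sum.inr L₁) ∧
        (affinePlaneGraph F).Adj v (Sum.inr L₂)}.Subsingleton := by
  have key : ∀ L₁ L₂ : F × F, L₁ ≠ L₂ →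
      {v : (F × F) ⊕ (F × F) |
        (affinePlaneGraph F).Adj v (Sum.inr L₁) ∧
        (affinePlaneGraph F).Adj v (Sum.inr L₂)}.Subsingleton := by
    rintro ⟨m₁,b₁⟩ ⟨m₂,b₂⟩ hne v ⟨hv1, hv2⟩ w ⟨hw1, hw2⟩
    obtain ⟨p, L, (⟨hp, hL⟩ | ⟨hp, hL⟩), he⟩ := adj_cases hv1 <;> cases hL
    obtain ⟨p', L', (⟨hp', hL'⟩ | ⟨hp', hL'⟩), he'⟩ := adj_cases hv2 <;> cases hL'
    obtain ⟨q, M, (⟨hq, hM⟩ | ⟨hq, hM⟩), hf⟩ := adj_cases hw1 <;> cases hM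
    obtain ⟨q', M', (⟨hq', hM'⟩ | ⟨hq', hM'⟩), hf'⟩ := adj_cases hw2 <;> cases hM'
    rw [hp] at hp'; injection hp' with hpp; subst hpp
    rw [hq] at hq'; injection hq' with hqq; subst hqq
    obtain ⟨hpr, hqr⟩ := And.intro hp hq
    subst hpr hqr
    rcases p with ⟨x, y⟩; rcases q with ⟨x', y'⟩
    simp only at he he' hf hf'
    by_cases hm : m₁ = m₂
    · subst hm
      have hb : b₁ = b₂ := by linear_combination he' - he
      exact absurd (by rw [hb]) hne
    · have hx : x = x' := by
        have h1 : (m₁ - m₂) * x = b₂ - b₁ := by linear_combination he' - he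
        have h2 : (m₁ - m₂) * x' = b₂ - b₁ := by linear_combination hf' - hf
        exact mul_left_cancel₀ (sub_ne_zero.mpr hm) (h1.trans h2.symm)
      subst hx
      rw [he.trans hf.symm]
  refine ⟨?_, key⟩
  rintro ⟨f, hinj, hadj⟩
  have h01 : (affinePlaneGraph F).Adj (f 0) (f 1) := hadj (by decide)
  have h12 : (affinePlaneGraph F).Adj (f 1) (f 2) := hadj (by decide)
  have h23 : (affinePlaneGraph F).Adj (f 2) (f 3) := hadj (by decide)
  have h30 : (affinePlaneGraph F).Adj (f 3) (f 0) := hadj (by decide)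
  obtain ⟨p, L, (⟨h0, h1⟩ | ⟨h0, h1⟩), _⟩ := adj_cases h01
  · -- f 0 = inl p, f 1 = inr L
    obtain ⟨q, M, (⟨h1', h2⟩ | ⟨h1', h2⟩), _⟩ := adj_cases h12
    · rw [h1] at h1'; exact absurd h1' (by simp)
    · -- f 2 = inl q
      obtain ⟨r, N, (⟨h2', h3⟩ | ⟨h2', h3⟩), _⟩ := adj_cases h23
      · -- f 3 = inr N
        have hLN : L ≠ N := by
          intro h; subst h
          exact absurd (hinj (h1.trans h3.symm)) (by decide)
        have := key L N hLN (x := f 0) (y := f 2) ⟨by rw [← h1]; exact h01, by rw [← h3]; exact h30.symm⟩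
          ⟨by rw [← h1]; exact h12.symm, by rw [← h3]; exact h23⟩
        exact absurd (hinj this) (by decide)
      · rw [h2] at h2'; exact absurd h2' (by simp)
  · -- f 0 = inr L, f 1 = inl p
    obtain ⟨q, M, (⟨h1', h2⟩ | ⟨h1', h2⟩), _⟩ := adj_cases h12
    · -- f 2 = inr M
      obtain ⟨r, N, (⟨h2', h3⟩ | ⟨h2', h3⟩), _⟩ := adj_cases h23
      · rw [h2] at h2'; exact absurd h2' (by simp)
      · -- f 3 = inl r
        have hLM : L ≠ M := by
          intro h; subst h
          exact absurd (hinj (h0.trans h2.symm)) (by decide)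
        have := key L M hLM (x := f 1) (y := f 3) ⟨by rw [← h0]; exact h01.symm, by rw [← h2]; exact h12⟩
          ⟨by rw [← h0]; exact h30, by rw [← h2]; exact h23.symm⟩
        exact absurd (hinj this) (by decide)
    · rw [h1] at h1'; exact absurd h1' (by simp)
end

section
/- Let p be a prime power, q = p², and let G be the bipartite graph whose vertex set is the disjoint union of points P = F_q × F_q and lines L = F_q × F_q, where a point (x,y) is adjacent to a line (m,b) if and only if y = m·x + b. Then the vertex set of G can be partitioned into p³ parts, each of size exactly 2p, such that for any two distinct parts there is at least one edge of G with one endpoint in each part. -/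
open Finset in
private theorem affinePlaneGraph_partition_key (F : Type*) [Field F] (p : ℕ)
    (EE : Finset F)
    (h0 : (0:F) ∈ EE) (h1 : (1:F) ∈ EE)
    (hadd : ∀ x ∈ EE, ∀ y ∈ EE, x + y ∈ EE)
    (hmul : ∀ x ∈ EE, ∀ y ∈ EE, x * y ∈ EE)
    (hneg : ∀ x ∈ EE, -x ∈ EE)
    (hinv : ∀ x ∈ EE, x⁻¹ ∈ EE)
    (hcard : EE.card = p)
    (ω : F) (hω : ω ∉ EE)
    (hcoords : ∀ z : F, ∃ a ∈ EE, ∃ b ∈ EE, z = a + b * ω) :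
    ∃ P : Fin (p ^ 3) → Finset ((F × F) ⊕ (F × F)),
      (∀ i, (P i).card = 2 * p) ∧ (∀ v, ∃! i, v ∈ P i) ∧
      ∀ i j, i ≠ j → ∃ u ∈ P i, ∃ w ∈ P j, (affinePlaneGraph F).Adj u w := by
  classical
  have hsub : ∀ x ∈ EE, ∀ y ∈ EE, x - y ∈ EE := by
    intro x hx y hy; rw [sub_eq_add_neg]; exact hadd _ hx _ (hneg _ hy)
  -- uniqueness of coordinates
  have huniq : ∀ a ∈ EE, ∀ b ∈ EE, ∀ a' ∈ EE, ∀ b' ∈ EE,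
      a + b * ω = a' + b' * ω → a = a' ∧ b = b' := by
    intro a ha b hb a' ha' b' hb' h
    rcases eq_or_ne b b' with rfl | hbb
    · exact ⟨by linear_combination h, rfl⟩
    · exfalso
      have hb0 : b' - b ≠ 0 := sub_ne_zero.mpr (Ne.symm hbb)
      have : ω = (a - a') * (b' - b)⁻¹ := by
        rw [← div_eq_mul_inv, eq_div_iff hb0]
        linear_combination -h
      exact hω (this ▸ hmul _ (hsub _ ha _ ha') _ (hinv _ (hsub _ hb' _ hb)))
  choose AA hAAm lam hlamm hdecomp using hcoords
  have AA_mk : ∀ a ∈ EE, ∀ b ∈ EE, AA (a + b * ω) = a := by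
    intro a ha b hb
    exact (huniq _ (hAAm _) _ (hlamm _) _ ha _ hb (hdecomp (a + b * ω)).symm).1
  have lam_mk : ∀ a ∈ EE, ∀ b ∈ EE, lam (a + b * ω) = b := by
    intro a ha b hb
    exact (huniq _ (hAAm _) _ (hlamm _) _ ha _ hb (hdecomp (a + b * ω)).symm).2
  have lam_of_mem : ∀ x ∈ EE, lam x = 0 := by
    intro x hx
    have := lam_mk x hx 0 h0
    simpa using this
  have AA_of_mem : ∀ x ∈ EE, AA x = x := by
    intro x hx
    have := AA_mk x hx 0 h0
    simpa using this
  set W1 := AA (ω * ω) with hW1def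
  set W2 := lam (ω * ω) with hW2def
  have hW : ω * ω = W1 + W2 * ω := hdecomp _
  have hW1m : W1 ∈ EE := hAAm _
  have hW2m : W2 ∈ EE := hlamm _
  -- the tournament functions h, t
  obtain ⟨hf, tf, hfm, tfm, hkey⟩ :
      ∃ (hf tf : F → F), (∀ r ∈ EE, hf r ∈ EE) ∧ (∀ m ∈ EE, tf m ∈ EE) ∧
        (∀ a ∈ EE, ∀ c ∈ EE, ∀ a' ∈ EE, ∀ c' ∈ EE, (a ≠ a' ∨ c ≠ c') →
          (hf (a - c) ≠ a' - c' ∨ a = c' - tf (a' - c')) ∨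
          (hf (a' - c') ≠ a - c ∨ a' = c - tf (a - c))) := by
    by_cases hbig : ∃ u ∈ EE, u ≠ 0 ∧ u ≠ 1
    · obtain ⟨u, hu, hu0, hu1⟩ := hbig
      refine ⟨fun r => if r = 0 then 1 else if r = 1 then u else 0, fun _ => 0,
        ?_, fun _ _ => h0, ?_⟩
      · intro r _
        dsimp only
        split_ifs <;> first | exact h1 | exact hu | exact h0
      · intro a _ c _ a' _ c' _ _
        set hf : F → F := fun r => if r = 0 then 1 else if r = 1 then u else 0 with hfdef
        have hfpf : ∀ x : F, hf (hf x) ≠ x := by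
          intro x
          by_cases hx0 : x = 0
          · subst hx0; simpa [hfdef] using hu0
          · by_cases hx1 : x = 1
            · subst hx1; simp [hfdef, hu0, hu1]
            · simpa [hfdef, hx0, hx1] using Ne.symm hx1
        by_cases hA : hf (a - c) = a' - c'
        · by_cases hB : hf (a' - c') = a - c
          · exact absurd (hA ▸ hB) (hfpf (a - c))
          · exact Or.inr (Or.inl hB)
        · exact Or.inl (Or.inl hA)
    · -- E = {0, 1}, characteristic 2 situation
      have hall : ∀ x ∈ EE, x = 0 ∨ x = 1 := by
        intro x hx
        by_contra hcon
        push_neg at hcon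
        exact hbig ⟨x, hx, hcon.1, hcon.2⟩
      have h2 : (1 : F) + 1 = 0 := by
        rcases hall _ (hadd _ h1 _ h1) with h | h
        · exact h
        · exact absurd (by linear_combination h) (one_ne_zero (α := F))
      refine ⟨id, fun m => m + 1, fun r hr => hr, fun m hm => hadd _ hm _ h1, ?_⟩
      intro a ha c hc a' ha' c' hc' hne
      simp only [id]
      by_cases hA : a - c = a' - c'
      · -- same slab: a ≠ a'
        have haa : a ≠ a' := by
          intro h
          apply hne.elim (fun h' => h' h)
          intro h'
          apply h'
          have := hA
          rw [h] at this
          linear_combination -this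
        left; right
        -- goal: a = c' - ((a' - c') + 1) ; char 2 : равно a' + 1
        have hgoal : c' - ((a' - c') + 1) = a' + 1 := by
          linear_combination (c' - a' - 1) * h2
        rw [hgoal]
        rcases hall _ ha with rfl | rfl <;> rcases hall _ ha' with rfl | rfl
        · exact absurd rfl haa
        · linear_combination -h2
        · linear_combination
        · exact absurd rfl haa
      · exact Or.inl (Or.inl hA)
  have hωne : (ω : F) ≠ 0 := fun h => hω (h ▸ h0)
  -- parts
  set P0 : F → F → F → Finset ((F × F) ⊕ (F × F)) := fun a s c =>
    if s = 0 then
      (EE.image fun x => Sum.inl (x, (a + c * ω) + hf (a - c) * (ω + 1) * x)) ∪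
      (EE.image fun v => Sum.inr (a - c, (c - tf (a - c)) + v * ω))
    else
      (EE.image fun t => Sum.inl (a + s * ω, t + c * ω)) ∪
      (EE.image fun t => Sum.inr (t + s * ω, a + c * ω)) with hP0def
  have hcardP : ∀ a s c : F, (P0 a s c).card = 2 * p := by
    intro a s c
    have hdisj : ∀ (f g : F → F × F),
        Disjoint (EE.image fun x => (Sum.inl (f x) : (F × F) ⊕ (F × F)))
          (EE.image fun x => (Sum.inr (g x) : (F × F) ⊕ (F × F))) := by
      intro f g
      rw [Finset.disjoint_left]
      rintro v hv hv'
      rw [Finset.mem_image] at hv hv'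
      obtain ⟨x, -, rfl⟩ := hv
      obtain ⟨y, -, h⟩ := hv'
      exact Sum.inr_ne_inl h
    by_cases hs : s = 0 <;>
      simp only [hP0def, hs, if_true, if_false, reduceIte] <;>
      rw [Finset.card_union_of_disjoint (hdisj _ _)] <;>
      rw [Finset.card_image_of_injective, Finset.card_image_of_injective, hcard, two_mul]
    · intro x y hxy
      simp only [Sum.inr.injEq, Prod.mk.injEq] at hxy
      exact mul_right_cancel₀ hωne (by linear_combination hxy.2)
    · intro x y hxy
      simp only [Sum.inl.injEq, Prod.mk.injEq] at hxy
      exact hxy.1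
    · intro x y hxy
      simp only [Sum.inr.injEq, Prod.mk.injEq] at hxy
      exact add_right_cancel (b := s * ω) hxy.1
    · intro x y hxy
      simp only [Sum.inl.injEq, Prod.mk.injEq] at hxy
      exact add_right_cancel (b := c * ω) hxy.2
  -- the index function
  set pf : (F × F) ⊕ (F × F) → F × F × F := fun v =>
    match v with
    | Sum.inl (x, y) =>
      if lam x = 0 then
        (AA (y - hf (AA y - lam y) * (ω + 1) * x), 0,
          lam (y - hf (AA y - lam y) * (ω + 1) * x))
      else (AA x, lam x, lam y)
    | Sum.inr (m, b) =>
      if lam m = 0 then (m + AA b + tf m, 0, AA b + tf m) else (AA b, lam m, lam b)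
    with hpfdef
  have hmem_of_lam0 : ∀ x : F, lam x = 0 → x ∈ EE := by
    intro x hx
    have h := hdecomp x
    rw [hx, zero_mul, add_zero] at h
    exact h ▸ hAAm x
  have hpf_mem : ∀ v, (pf v).1 ∈ EE ∧ (pf v).2.1 ∈ EE ∧ (pf v).2.2 ∈ EE := by
    rintro (⟨x, y⟩ | ⟨m, b⟩)
    · by_cases h : lam x = 0 <;> simp only [hpfdef, h, if_true, if_false, reduceIte]
      · exact ⟨hAAm _, h0, hlamm _⟩
      · exact ⟨hAAm _, hlamm _, hlamm _⟩
    · by_cases h : lam m = 0 <;> simp only [hpfdef, h, if_true, if_false, reduceIte]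
      · refine ⟨hadd _ (hadd _ (hmem_of_lam0 _ h) _ (hAAm _)) _ (tfm _ (hmem_of_lam0 _ h)),
          h0, hadd _ (hAAm _) _ (tfm _ (hmem_of_lam0 _ h))⟩
      · exact ⟨hAAm _, hlamm _, hlamm _⟩
  have hpf_self : ∀ v, v ∈ P0 (pf v).1 (pf v).2.1 (pf v).2.2 := by
    rintro (⟨x, y⟩ | ⟨m, b⟩)
    · by_cases hx : lam x = 0
      · have hxE : x ∈ EE := hmem_of_lam0 x hx
        simp only [hpfdef, hx, if_true, reduceIte]
        set r := AA y - lam y with hrdef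
        have hrm : r ∈ EE := hsub _ (hAAm y) _ (hlamm y)
        have hvm : hf r ∈ EE := hfm _ hrm
        set w := y - hf r * (ω + 1) * x with hwdef
        have hwc : w = (AA y - hf r * x) + (lam y - hf r * x) * ω := by
          rw [hwdef]
          linear_combination hdecomp y
        have hAAw : AA w = AA y - hf r * x := by
          rw [hwc]; exact AA_mk _ (hsub _ (hAAm y) _ (hmul _ hvm _ hxE)) _
            (hsub _ (hlamm y) _ (hmul _ hvm _ hxE))
        have hlamw : lam w = lam y - hf r * x := by
          rw [hwc]; exact lam_mk _ (hsub _ (hAAm y) _ (hmul _ hvm _ hxE)) _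
            (hsub _ (hlamm y) _ (hmul _ hvm _ hxE))
        simp only [hP0def, if_true, reduceIte]
        refine Finset.mem_union_left _ (Finset.mem_image.mpr ⟨x, hxE, ?_⟩)
        have hrr : AA w - lam w = r := by rw [hAAw, hlamw]; ring
        rw [hrr]
        have : AA w + lam w * ω = w := (hdecomp w).symm
        rw [this, hwdef]
        norm_num
      · simp only [hpfdef, hx, if_false, reduceIte, hP0def]
        refine Finset.mem_union_left _ (Finset.mem_image.mpr ⟨AA y, hAAm y, ?_⟩)
        rw [← hdecomp x, ← hdecomp y]
    · by_cases hm : lam m = 0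
      · have hmE : m ∈ EE := hmem_of_lam0 m hm
        simp only [hpfdef, hm, if_true, reduceIte, hP0def]
        refine Finset.mem_union_right _ (Finset.mem_image.mpr ⟨lam b, hlamm b, ?_⟩)
        have hm' : m + AA b + tf m - (AA b + tf m) = m := by ring
        rw [hm']
        have hb' : AA b + tf m - tf m + lam b * ω = b := by linear_combination -hdecomp b
        rw [hb']
      · simp only [hpfdef, hm, if_false, reduceIte, hP0def]
        refine Finset.mem_union_right _ (Finset.mem_image.mpr ⟨AA m, hAAm m, ?_⟩)
        rw [← hdecomp m, ← hdecomp b]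
  have hpf_uniq : ∀ a ∈ EE, ∀ s ∈ EE, ∀ c ∈ EE, ∀ v, v ∈ P0 a s c → pf v = (a, s, c) := by
    intro a ha s hs c hc v hv
    by_cases hs0 : s = 0
    · subst hs0
      simp only [hP0def, if_true, reduceIte, Finset.mem_union, Finset.mem_image] at hv
      rcases hv with ⟨x, hxE, rfl⟩ | ⟨u, huE, rfl⟩
      · have hx0 : lam x = 0 := lam_of_mem x hxE
        simp only [hpfdef, hx0, if_true, reduceIte]
        set y := a + c * ω + hf (a - c) * (ω + 1) * x with hydef
        have hacm : a - c ∈ EE := hsub _ ha _ hc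
        have hfx : hf (a - c) * x ∈ EE := hmul _ (hfm _ hacm) _ hxE
        have hyc : y = (a + hf (a - c) * x) + (c + hf (a - c) * x) * ω := by
          rw [hydef]; ring
        have hAAy : AA y = a + hf (a - c) * x := by
          rw [hyc]; exact AA_mk _ (hadd _ ha _ hfx) _ (hadd _ hc _ hfx)
        have hlamy : lam y = c + hf (a - c) * x := by
          rw [hyc]; exact lam_mk _ (hadd _ ha _ hfx) _ (hadd _ hc _ hfx)
        have hr : AA y - lam y = a - c := by rw [hAAy, hlamy]; ring
        rw [hr]
        have hw : y - hf (a - c) * (ω + 1) * x = a + c * ω := by rw [hydef]; ring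
        rw [hw]
        rw [AA_mk _ ha _ hc, lam_mk _ ha _ hc]
      · have hβ : c - tf (a - c) ∈ EE := hsub _ hc _ (tfm _ (hsub _ ha _ hc))
        have hm0 : lam (a - c) = 0 := lam_of_mem _ (hsub _ ha _ hc)
        simp only [hpfdef, hm0, if_true, reduceIte]
        have hAAb : AA (c - tf (a - c) + u * ω) = c - tf (a - c) := AA_mk _ hβ _ huE
        rw [hAAb]
        refine Prod.ext ?_ (Prod.ext rfl ?_) <;> dsimp <;> ring
    · simp only [hP0def, hs0, if_false, reduceIte, Finset.mem_union, Finset.mem_image] at hv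
      rcases hv with ⟨t, htE, rfl⟩ | ⟨t, htE, rfl⟩
      · have h1' : lam (a + s * ω) = s := lam_mk _ ha _ hs
        simp only [hpfdef, h1', hs0, if_false, reduceIte]
        rw [AA_mk _ ha _ hs, lam_mk _ htE _ hc]
      · have h1' : lam (t + s * ω) = s := lam_mk _ htE _ hs
        simp only [hpfdef, h1', hs0, if_false, reduceIte]
        rw [AA_mk _ ha _ hc, lam_mk _ ha _ hc]
  have adj_iff : ∀ x y m b : F,
      (affinePlaneGraph F).Adj (Sum.inl (x, y)) (Sum.inr (m, b)) ↔ y = m * x + b := by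
    intro x y m b
    simp [affinePlaneGraph, SimpleGraph.fromRel_adj]
  -- good-good edge
  have edgeA : ∀ a ∈ EE, ∀ s ∈ EE, ∀ c ∈ EE, ∀ a' ∈ EE, ∀ s' ∈ EE, ∀ c' ∈ EE,
      s ≠ 0 → s' ≠ 0 →
      ∃ u ∈ P0 a s c, ∃ w ∈ P0 a' s' c', (affinePlaneGraph F).Adj u w := by
    intro a ha s hs c hc a' ha' s' hs' c' hc' hsne hs'ne
    set t₀ := (c - c' - s' * a - s' * s * W2) * s⁻¹ with ht₀def
    have ht₀m : t₀ ∈ EE := hmul _ (hsub _ (hsub _ (hsub _ hc _ hc') _ (hmul _ hs' _ ha)) _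
      (hmul _ (hmul _ hs' _ hs) _ hW2m)) _ (hinv _ hs)
    set x₀ := a + s * ω with hx₀def
    set m₀ := t₀ + s' * ω with hm₀def
    set b₀ := a' + c' * ω with hb₀def
    set y₀ := m₀ * x₀ + b₀ with hy₀def
    have hyc : y₀ = (t₀ * a + s' * s * W1 + a') + (t₀ * s + s' * a + s' * s * W2 + c') * ω := by
      rw [hy₀def, hm₀def, hx₀def, hb₀def]
      linear_combination (s' * s) * hW
    have hAm : t₀ * a + s' * s * W1 + a' ∈ EE :=
      hadd _ (hadd _ (hmul _ ht₀m _ ha) _ (hmul _ (hmul _ hs' _ hs) _ hW1m)) _ ha'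
    have hLm : t₀ * s + s' * a + s' * s * W2 + c' ∈ EE :=
      hadd _ (hadd _ (hadd _ (hmul _ ht₀m _ hs) _ (hmul _ hs' _ ha)) _
        (hmul _ (hmul _ hs' _ hs) _ hW2m)) _ hc'
    have hlamy : lam y₀ = c := by
      rw [hyc, lam_mk _ hAm _ hLm, ht₀def]
      field_simp
      ring
    refine ⟨Sum.inl (x₀, y₀), ?_, Sum.inr (m₀, b₀), ?_, ?_⟩
    · simp only [hP0def, hsne, if_false, reduceIte]
      refine Finset.mem_union_left _ (Finset.mem_image.mpr ⟨AA y₀, hAAm y₀, ?_⟩)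
      have : AA y₀ + c * ω = y₀ := by
        conv_rhs => rw [hdecomp y₀, hlamy]
      rw [this, hx₀def]
    · simp only [hP0def, hs'ne, if_false, reduceIte]
      exact Finset.mem_union_right _ (Finset.mem_image.mpr ⟨t₀, ht₀m, rfl⟩)
    · exact (adj_iff _ _ _ _).mpr rfl
  -- good-bad edge (i good, j bad)
  have edgeB : ∀ a ∈ EE, ∀ s ∈ EE, ∀ c ∈ EE, ∀ a' ∈ EE, ∀ c' ∈ EE, s ≠ 0 →
      ∃ u ∈ P0 a s c, ∃ w ∈ P0 a' 0 c', (affinePlaneGraph F).Adj u w := by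
    intro a ha s hs c hc a' ha' c' hc' hsne
    set m₀ := a' - c' with hm₀def
    have hm₀m : m₀ ∈ EE := hsub _ ha' _ hc'
    set β := c' - tf m₀ with hβdef
    have hβm : β ∈ EE := hsub _ hc' _ (tfm _ hm₀m)
    set u₀ := c - m₀ * s with hu₀def
    have hu₀m : u₀ ∈ EE := hsub _ hc _ (hmul _ hm₀m _ hs)
    set x₀ := a + s * ω with hx₀def
    set b₀ := β + u₀ * ω with hb₀def
    set y₀ := m₀ * x₀ + b₀ with hy₀def
    have hyc : y₀ = (m₀ * a + β) + c * ω := by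
      rw [hy₀def, hx₀def, hb₀def, hu₀def]; ring
    have hlamy : lam y₀ = c := by
      rw [hyc]; exact lam_mk _ (hadd _ (hmul _ hm₀m _ ha) _ hβm) _ hc
    refine ⟨Sum.inl (x₀, y₀), ?_, Sum.inr (m₀, b₀), ?_, ?_⟩
    · simp only [hP0def, hsne, if_false, reduceIte]
      refine Finset.mem_union_left _ (Finset.mem_image.mpr ⟨AA y₀, hAAm y₀, ?_⟩)
      have : AA y₀ + c * ω = y₀ := by
        conv_rhs => rw [hdecomp y₀, hlamy]
      rw [this, hx₀def]
    · simp only [hP0def, if_true, reduceIte]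
      exact Finset.mem_union_right _ (Finset.mem_image.mpr ⟨u₀, hu₀m, rfl⟩)
    · exact (adj_iff _ _ _ _).mpr rfl
  -- bad-bad edge, one direction
  have edgeC : ∀ a ∈ EE, ∀ c ∈ EE, ∀ a' ∈ EE, ∀ c' ∈ EE,
      (hf (a - c) ≠ a' - c' ∨ a = c' - tf (a' - c')) →
      ∃ u ∈ P0 a 0 c, ∃ w ∈ P0 a' 0 c', (affinePlaneGraph F).Adj u w := by
    intro a ha c hc a' ha' c' hc' hcond
    set r := a - c with hrdef
    have hrm : r ∈ EE := hsub _ ha _ hc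
    set m' := a' - c' with hm'def
    have hm'm : m' ∈ EE := hsub _ ha' _ hc'
    set β := c' - tf m' with hβdef
    have hβm : β ∈ EE := hsub _ hc' _ (tfm _ hm'm)
    -- choose x₀
    obtain ⟨x₀, hx₀m, hx₀eq⟩ : ∃ x₀ ∈ EE, (hf r - m') * x₀ = β - a := by
      rcases hcond with hD | hE
      · have hDne : hf r - m' ≠ 0 := sub_ne_zero.mpr hD
        refine ⟨(β - a) * (hf r - m')⁻¹, hmul _ (hsub _ hβm _ ha) _
          (hinv _ (hsub _ (hfm _ hrm) _ hm'm)), ?_⟩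
        field_simp
      · refine ⟨0, h0, ?_⟩
        rw [mul_zero, hE, hβdef, sub_self]
    set u₀ := c + hf r * x₀ with hu₀def
    have hu₀m : u₀ ∈ EE := hadd _ hc _ (hmul _ (hfm _ hrm) _ hx₀m)
    set y₀ := (a + c * ω) + hf r * (ω + 1) * x₀ with hy₀def
    set b₀ := β + u₀ * ω with hb₀def
    refine ⟨Sum.inl (x₀, y₀), ?_, Sum.inr (m', b₀), ?_, ?_⟩
    · simp only [hP0def, if_true, reduceIte]
      exact Finset.mem_union_left _ (Finset.mem_image.mpr ⟨x₀, hx₀m, rfl⟩)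
    · simp only [hP0def, if_true, reduceIte]
      exact Finset.mem_union_right _ (Finset.mem_image.mpr ⟨u₀, hu₀m, rfl⟩)
    · refine (adj_iff _ _ _ _).mpr ?_
      rw [hy₀def, hb₀def, hu₀def]
      linear_combination hx₀eq
  -- assemble the edge property
  have hedge : ∀ a ∈ EE, ∀ s ∈ EE, ∀ c ∈ EE, ∀ a' ∈ EE, ∀ s' ∈ EE, ∀ c' ∈ EE,
      (a ≠ a' ∨ s ≠ s' ∨ c ≠ c') →
      ∃ u ∈ P0 a s c, ∃ w ∈ P0 a' s' c', (affinePlaneGraph F).Adj u w := by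
    intro a ha s hs c hc a' ha' s' hs' c' hc' hne
    by_cases hs0 : s = 0 <;> by_cases hs'0 : s' = 0
    · subst hs0; subst hs'0
      have hne' : a ≠ a' ∨ c ≠ c' := by tauto
      rcases hkey a ha c hc a' ha' c' hc' hne' with h | h
      · exact edgeC a ha c hc a' ha' c' hc' h
      · obtain ⟨u, hu, w, hw, hadj⟩ := edgeC a' ha' c' hc' a ha c hc h
        exact ⟨w, hw, u, hu, hadj.symm⟩
    · subst hs0
      obtain ⟨u, hu, w, hw, hadj⟩ := edgeB a' ha' s' hs' c' hc' a ha c hc hs'0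
      exact ⟨w, hw, u, hu, hadj.symm⟩
    · subst hs'0
      exact edgeB a ha s hs c hc a' ha' c' hc' hs0
    · exact edgeA a ha s hs c hc a' ha' s' hs' c' hc' hs0 hs'0
  -- index bookkeeping
  have hcardT : Fintype.card {x : F // x ∈ EE} = p := by rw [Fintype.card_coe, hcard]
  have hcardI : Fintype.card
      ({x : F // x ∈ EE} × {x : F // x ∈ EE} × {x : F // x ∈ EE}) = p ^ 3 := by
    rw [Fintype.card_prod, Fintype.card_prod, hcardT]
    ring
  set e := (Fintype.equivFinOfCardEq hcardI).symm with hedef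
  refine ⟨fun i => P0 ((e i).1 : F) ((e i).2.1 : F) ((e i).2.2 : F),
    fun i => hcardP _ _ _, ?_, ?_⟩
  · intro v
    obtain ⟨h1m, h2m, h3m⟩ := hpf_mem v
    refine ⟨e.symm ⟨⟨(pf v).1, h1m⟩, ⟨(pf v).2.1, h2m⟩, ⟨(pf v).2.2, h3m⟩⟩, ?_, ?_⟩
    · simp only [Equiv.apply_symm_apply]
      exact hpf_self v
    · intro j hj
      have hu := hpf_uniq ((e j).1 : F) (e j).1.2 ((e j).2.1 : F) (e j).2.1.2
        ((e j).2.2 : F) (e j).2.2.2 v hj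
      rw [Equiv.eq_symm_apply]
      have h1 : (pf v).1 = ((e j).1 : F) := by rw [hu]
      have h2 : (pf v).2.1 = ((e j).2.1 : F) := by rw [hu]
      have h3 : (pf v).2.2 = ((e j).2.2 : F) := by rw [hu]
      exact Prod.ext (Subtype.ext h1.symm) (Prod.ext (Subtype.ext h2.symm)
        (Subtype.ext h3.symm))
  · intro i j hij
    refine hedge ((e i).1 : F) (e i).1.2 ((e i).2.1 : F) (e i).2.1.2
      ((e i).2.2 : F) (e i).2.2.2 ((e j).1 : F) (e j).1.2 ((e j).2.1 : F) (e j).2.1.2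
      ((e j).2.2 : F) (e j).2.2.2 ?_
    by_contra hcon
    push_neg at hcon
    obtain ⟨hA, hS, hC⟩ := hcon
    apply hij
    apply e.injective
    exact Prod.ext (Subtype.ext hA) (Prod.ext (Subtype.ext hS) (Subtype.ext hC))


/-- If `p` is a prime power and `F` is the field with `q = p²` elements,
then the vertex set of the affine plane incidence graph over `F` can be partitioned into
`p³` parts, each of size exactly `2p`, with an edge of the graph between any two
distinct parts. -/
theorem affinePlaneGraph_partition (p : ℕ) (hp : IsPrimePow p)
    (F : Type*) [Field F] [Fintype F] (hF : Fintype.card F = p ^ 2) :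
    ∃ P : Fin (p ^ 3) → Finset ((F × F) ⊕ (F × F)),
      (∀ i, (P i).card = 2 * p) ∧
      (∀ v, ∃! i, v ∈ P i) ∧
      ∀ i j, i ≠ j → ∃ u ∈ P i, ∃ w ∈ P j, (affinePlaneGraph F).Adj u w := by
  classical
  obtain ⟨r, k, hrpr, hkpos, hrk⟩ := hp
  have hrP : Nat.Prime r := Nat.prime_iff.mpr hrpr
  have hp2 : 2 ≤ p := by
    calc 2 ≤ r := hrP.two_le
    _ = r ^ 1 := (pow_one r).symm
    _ ≤ r ^ k := Nat.pow_le_pow_right hrP.pos hkpos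
    _ = p := hrk
  -- characteristic
  obtain ⟨n, hcprime, hcardF⟩ := FiniteField.card F (ringChar F)
  have heq : (ringChar F) ^ (n : ℕ) = r ^ (2 * k) := by
    rw [← hcardF, hF, ← hrk, ← pow_mul, mul_comm]
  have hcr : ringChar F = r := by
    have h1 : ringChar F ∣ r ^ (2 * k) := by
      rw [← heq]
      exact dvd_pow_self _ (by positivity)
    exact (Nat.prime_dvd_prime_iff_eq hcprime hrP).mp (hcprime.dvd_of_dvd_pow h1)
  haveI hcharr : CharP F r := hcr ▸ ringChar.charP F
  haveI : Fact (Nat.Prime r) := ⟨hrP⟩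
  -- the subfield as a finset
  set EE : Finset F := Finset.univ.filter (fun x : F => x ^ p = x) with hEEdef
  have hmemEE : ∀ x : F, x ∈ EE ↔ x ^ p = x := by
    intro x; simp [hEEdef]
  have hppos : 0 < p := by omega
  have h0 : (0:F) ∈ EE := (hmemEE 0).mpr (zero_pow (by omega))
  have h1' : (1:F) ∈ EE := (hmemEE 1).mpr (one_pow p)
  have hadd : ∀ x ∈ EE, ∀ y ∈ EE, x + y ∈ EE := by
    intro x hx y hy
    rw [hmemEE] at *
    rw [← hrk, add_pow_char_pow]
    rw [← hrk] at hx hy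
    rw [hx, hy]
  have hmul : ∀ x ∈ EE, ∀ y ∈ EE, x * y ∈ EE := by
    intro x hx y hy
    rw [hmemEE] at *
    rw [mul_pow, hx, hy]
  have hneg : ∀ x ∈ EE, -x ∈ EE := by
    intro x hx
    rw [hmemEE] at *
    rcases Nat.even_or_odd p with hev | hod
    · have h2r : r = 2 := by
        have h2p : 2 ∣ p := hev.two_dvd
        rw [← hrk] at h2p
        exact ((Nat.prime_dvd_prime_iff_eq Nat.prime_two hrP).mp
          (Nat.prime_two.dvd_of_dvd_pow h2p)).symm
      haveI : CharP F 2 := h2r ▸ hcharr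
      rw [CharTwo.neg_eq]; exact hx
    · rw [hod.neg_pow, hx]
  have hinv : ∀ x ∈ EE, x⁻¹ ∈ EE := by
    intro x hx
    rw [hmemEE] at *
    rw [inv_pow, hx]
  -- cardinality: upper bound
  have hub : EE.card ≤ p := by
    have hsubn : EE ⊆ insert (0:F) (Polynomial.nthRoots (p-1) (1:F)).toFinset := by
      intro x hx
      rw [hmemEE] at hx
      rcases eq_or_ne x 0 with rfl | hx0
      · exact Finset.mem_insert_self _ _
      · refine Finset.mem_insert_of_mem ?_
        rw [Multiset.mem_toFinset, Polynomial.mem_nthRoots (by omega : 0 < p - 1)]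
        have hxp : x ^ (p - 1) * x = x := by
          rw [← pow_succ]
          have hpp : p - 1 + 1 = p := by omega
          rw [hpp, hx]
        exact mul_right_cancel₀ hx0 (hxp.trans (one_mul x).symm)
    calc EE.card ≤ _ := Finset.card_le_card hsubn
      _ ≤ (Polynomial.nthRoots (p-1) (1:F)).toFinset.card + 1 := Finset.card_insert_le _ _
      _ ≤ Multiset.card (Polynomial.nthRoots (p-1) (1:F)) + 1 :=
          Nat.add_le_add_right (Multiset.toFinset_card_le _) 1
      _ ≤ (p - 1) + 1 := Nat.add_le_add_right (Polynomial.card_nthRoots _ _) 1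
      _ = p := by omega
  -- cardinality: lower bound
  have hlb : p ≤ EE.card := by
    obtain ⟨g, hg⟩ := IsCyclic.exists_generator (α := Fˣ)
    have horder : orderOf g = p ^ 2 - 1 := by
      rw [orderOf_eq_card_of_forall_mem_zpowers hg, Nat.card_eq_fintype_card, Fintype.card_units, hF]
    have hfact : (p + 1) * (p - 1) = p ^ 2 - 1 := by
      obtain ⟨m, rfl⟩ : ∃ m, p = m + 2 := ⟨p - 2, by omega⟩
      have h1 : (m+2)^2 = m*m + 4*m + 4 := by ring
      have h2 : (m+2+1)*(m+2-1) = m*m+4*m+3 := by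
        have hmm : m+2-1 = m+1 := by omega
        rw [hmm]; ring
      omega
    have hdvd : (p+1) ∣ p^2 - 1 := ⟨p - 1, hfact.symm⟩
    set z := g ^ (p+1) with hz
    have hordz : orderOf z = p - 1 := by
      rw [hz, orderOf_pow' g (by omega : p+1 ≠ 0), horder, Nat.gcd_eq_right hdvd, ← hfact,
        Nat.mul_div_cancel_left _ (by omega : 0 < p+1)]
    have hzpow : ((z : Fˣ) : F) ^ (p-1) = 1 := by
      have hzz : z ^ (p-1) = 1 := by rw [← hordz]; exact pow_orderOf_eq_one z
      have hcast := congrArg (Units.val) hzz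
      simpa [Units.val_pow_eq_pow_val] using hcast
    set S : Finset F := (Finset.range (p-1)).image (fun i => ((z : Fˣ) : F) ^ i) with hS
    have hScard : S.card = p - 1 := by
      rw [hS, Finset.card_image_of_injOn, Finset.card_range]
      intro i hi j hj hij
      simp only [Finset.coe_range, Set.mem_Iio] at hi hj
      have hunit : z ^ i = z ^ j := Units.ext (by simpa [Units.val_pow_eq_pow_val] using hij)
      exact pow_injOn_Iio_orderOf (by simpa [Set.mem_Iio, hordz] using hi)
        (by simpa [Set.mem_Iio, hordz] using hj) hunit
    have hSsub : S ⊆ EE := by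
      intro x hx
      rw [hS, Finset.mem_image] at hx
      obtain ⟨i, -, rfl⟩ := hx
      rw [hmemEE]
      have h1'' : (((z:Fˣ):F) ^ i) ^ (p-1) = 1 := by
        rw [← pow_mul, mul_comm, pow_mul, hzpow, one_pow]
      have hsplit : (((z:Fˣ):F)^i)^p = (((z:Fˣ):F)^i)^(p-1) * ((z:Fˣ):F)^i := by
        rw [← pow_succ]
        congr 1
        omega
      rw [hsplit, h1'', one_mul]
    have h0S : (0:F) ∉ S := by
      rw [hS, Finset.mem_image]
      rintro ⟨i, -, h⟩
      exact (pow_ne_zero i (Units.ne_zero z)) h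
    have hins : insert (0:F) S ⊆ EE := Finset.insert_subset h0 hSsub
    have hle := Finset.card_le_card hins
    rw [Finset.card_insert_of_notMem h0S, hScard] at hle
    omega
  have hcardEE : EE.card = p := le_antisymm hub hlb
  -- find ω outside EE
  obtain ⟨ω, hω⟩ : ∃ ω : F, ω ∉ EE := by
    by_contra hcon
    push_neg at hcon
    have hsubu : (Finset.univ : Finset F) ⊆ EE := fun x _ => hcon x
    have hle := Finset.card_le_card hsubu
    rw [Finset.card_univ, hF, hcardEE] at hle
    have hlt : p < p ^ 2 := by nlinarith
    omega
  -- coordinates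
  have hcoords : ∀ z : F, ∃ a ∈ EE, ∃ b ∈ EE, z = a + b * ω := by
    have hinj : Function.Injective
        (fun ab : {x : F // x ∈ EE} × {x : F // x ∈ EE} => (ab.1 : F) + (ab.2 : F) * ω) := by
      rintro ⟨⟨a, ha⟩, ⟨b, hb⟩⟩ ⟨⟨a', ha'⟩, ⟨b', hb'⟩⟩ h
      dsimp only at h
      rcases eq_or_ne b b' with hbb | hbb
      · subst hbb
        have : a = a' := by
          have := add_right_cancel h
          exact this
        subst this
        rfl
      · exfalso
        have hb0 : b' - b ≠ 0 := sub_ne_zero.mpr (Ne.symm hbb)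
        have hωval : ω = (a - a') * (b' - b)⁻¹ := by
          rw [← div_eq_mul_inv, eq_div_iff hb0]
          linear_combination -h
        have hsubc : ∀ x ∈ EE, ∀ y ∈ EE, x - y ∈ EE := by
          intro x hx y hy
          rw [sub_eq_add_neg]
          exact hadd _ hx _ (hneg _ hy)
        exact hω (hωval ▸ hmul _ (hsubc _ ha _ ha') _ (hinv _ (hsubc _ hb' _ hb)))
    have hbij : Function.Bijective
        (fun ab : {x : F // x ∈ EE} × {x : F // x ∈ EE} => (ab.1 : F) + (ab.2 : F) * ω) := by
      rw [Fintype.bijective_iff_injective_and_card]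
      refine ⟨hinj, ?_⟩
      rw [Fintype.card_prod, Fintype.card_coe, hcardEE, hF]
      ring
    intro z
    obtain ⟨⟨⟨a, ha⟩, ⟨b, hb⟩⟩, hab⟩ := hbij.2 z
    exact ⟨a, ha, b, hb, hab.symm⟩
  exact affinePlaneGraph_partition_key F p EE h0 h1' hadd hmul hneg hinv hcardEE ω hω hcoords
end

section
/- Let t ≥ 2 be an integer. There is a positive constant C = C(t) such that for all sufficiently large n, f(n, K_{2,t}) ≥ C·n^{1/3}. In particular, one may take C = t^{−1/3} − o(1): for every ε > 0 and all sufficiently large n, f(n, K_{2,t}) ≥ (t^{−1/3} − ε)·n^{1/3}. -/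
/-!
An `(n, k)`-graph has at most `nk` vertices and, since distinct pairs of blobs are joined by
distinct edges, at least `n(n-1)/2` edges. If it is `K_{2,t}`-free, two vertices share fewer
than `t` neighbours, so counting paths of length two and applying Cauchy–Schwarz to the degrees
gives the Kővári–Sós–Turán bound `2e ≤ N + √((t-1) N³)` on `N` vertices. Hence
`n² - n ≤ nk + √((t-1) (nk)³)`, which forces `k ≥ (t^{-1/3} - o(1)) n^{1/3}`.
The perfect matching joining `(i, j)` to `(j, i)` is a `K_{2,t}`-free `(n, n)`-graph, so the
infimum defining `f(n, K_{2,t})` is attained.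
-/

open Finset Filter Real

theorem le_add_of_sq_le_sq_add_mul {D N R : ℝ} (hN : 0 ≤ N) (hR : 0 ≤ R)
    (h : D ^ 2 ≤ R ^ 2 + N * D) : D ≤ N + R := by
  by_contra! hlt
  nlinarith

namespace SimpleGraph

section Degrees

variable {V : Type*} (G : SimpleGraph V)

theorem containsCopy_iff_isContained {β : Type*} (H : SimpleGraph β) :
    G.ContainsCopy H ↔ H ⊑ G :=
  ⟨fun ⟨f, hf, hadj⟩ ↦ ⟨⟨⟨f, fun h ↦ hadj h⟩, hf⟩⟩,
    fun ⟨c⟩ ↦ ⟨c, c.injective, fun _ _ h ↦ c.toHom.map_adj h⟩⟩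

theorem not_containsCopy_completeBipartiteGraph_of_adj_unique {t : ℕ} (ht : 0 < t)
    (hG : ∀ ⦃u v w⦄, G.Adj u w → G.Adj v w → u = v) :
    ¬ G.ContainsCopy (completeBipartiteGraph (Fin 2) (Fin t)) := by
  rintro ⟨f, hf, hadj⟩
  have h01 : f (.inl 0) = f (.inl 1) :=
    hG (@hadj (.inl 0) (.inr ⟨0, ht⟩) (by simp)) (@hadj (.inl 1) (.inr ⟨0, ht⟩) (by simp))
  simpa using hf h01

variable [Fintype V] [DecidableRel G.Adj]

theorem card_neighborFinset_inter_lt [DecidableEq V] {t : ℕ}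
    (hG : ¬ G.ContainsCopy (completeBipartiteGraph (Fin 2) (Fin t))) {u w : V} (huw : u ≠ w) :
    #(G.neighborFinset u ∩ G.neighborFinset w) < t := by
  by_contra! hle
  obtain ⟨right, hright, hcard⟩ := exists_subset_card_eq hle
  refine hG ((G.containsCopy_iff_isContained _).2 <|
    completeBipartiteGraph_isContained_iff.2 ⟨{u, w}, right, by simp [huw], by simpa, ?_⟩)
  intro a ha b hb
  have hb := hright hb
  simp only [coe_insert, coe_singleton, Set.mem_insert_iff, Set.mem_singleton_iff] at ha
  simp only [mem_inter, mem_neighborFinset] at hb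
  rcases ha with rfl | rfl
  exacts [hb.1, hb.2]

theorem sum_card_offDiag_neighborFinset_le [DecidableEq V] {s : ℕ}
    (h : ∀ u w, u ≠ w → #(G.neighborFinset u ∩ G.neighborFinset w) ≤ s) :
    ∑ v, #(G.neighborFinset v).offDiag ≤ s * #(univ : Finset V).offDiag := by
  let r : V → V × V → Prop := fun v p ↦ p ∈ (G.neighborFinset v).offDiag
  calc ∑ v, #(G.neighborFinset v).offDiag
      = ∑ v, #((univ : Finset V).offDiag.bipartiteAbove r v) := by
        congr! 2 with v; ext p; simp [r, bipartiteAbove]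
    _ = ∑ p ∈ (univ : Finset V).offDiag, #(univ.bipartiteBelow r p) :=
        sum_card_bipartiteAbove_eq_sum_card_bipartiteBelow r
    _ ≤ ∑ p ∈ (univ : Finset V).offDiag, s := by
        refine sum_le_sum fun p hp ↦ ?_
        have hp : p.1 ≠ p.2 := (mem_offDiag.1 hp).2.2
        have hbelow : univ.bipartiteBelow r p = G.neighborFinset p.1 ∩ G.neighborFinset p.2 := by
          ext v; simp [r, hp, G.adj_comm v]
        exact hbelow ▸ h p.1 p.2 hp
    _ = s * #(univ : Finset V).offDiag := by rw [sum_const, smul_eq_mul, mul_comm]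

theorem cast_card_offDiag_neighborFinset (v : V) :
    (#(G.neighborFinset v).offDiag : ℝ) = (G.degree v : ℝ) ^ 2 - G.degree v := by
  rw [offDiag_card, card_neighborFinset_eq_degree, Nat.cast_sub (Nat.le_mul_self _)]
  push_cast
  ring

theorem two_mul_card_edgeFinset_le [DecidableEq V] {s : ℕ}
    (h : ∀ u w, u ≠ w → #(G.neighborFinset u ∩ G.neighborFinset w) ≤ s) :
    (2 * #G.edgeFinset : ℝ) ≤ Fintype.card V + √(s * Fintype.card V ^ 3) := by
  set N : ℝ := (Fintype.card V : ℝ)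
  set D : ℝ := ∑ v, (G.degree v : ℝ)
  have hD : D = 2 * #G.edgeFinset := by
    simp only [D]; exact_mod_cast G.sum_degrees_eq_twice_card_edges
  have hoffDiag : (#(univ : Finset V).offDiag : ℝ) ≤ N ^ 2 := by
    have : #(univ : Finset V).offDiag ≤ Fintype.card V ^ 2 := by
      rw [offDiag_card, card_univ, sq]; exact Nat.sub_le _ _
    simp only [N]; exact_mod_cast this
  have hpairs : ∑ v, (G.degree v : ℝ) ^ 2 ≤ s * N ^ 2 + D := by
    have hsum :
        ∑ v, ((G.degree v : ℝ) ^ 2 - G.degree v) ≤ s * #(univ : Finset V).offDiag := by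
      simp only [← cast_card_offDiag_neighborFinset]
      exact_mod_cast G.sum_card_offDiag_neighborFinset_le h
    rw [sum_sub_distrib] at hsum
    nlinarith [(s.cast_nonneg : (0 : ℝ) ≤ s)]
  have hCS : D ^ 2 ≤ N * ∑ v, (G.degree v : ℝ) ^ 2 := by
    simpa using sq_sum_le_card_mul_sum_sq (s := univ) (f := fun v ↦ (G.degree v : ℝ))
  have hN : 0 ≤ N := Nat.cast_nonneg _
  rw [← hD]
  refine le_add_of_sq_le_sq_add_mul hN (Real.sqrt_nonneg _) ?_
  rw [Real.sq_sqrt (by positivity)]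
  nlinarith

end Degrees

section NKGraph

variable {V : Type*} {G : SimpleGraph V} {n k : ℕ}

theorem IsNKGraph.card_le [Fintype V] (hG : G.IsNKGraph n k) : Fintype.card V ≤ n * k := by
  classical
  obtain ⟨P, -, hcard, hmem, -⟩ := hG
  have hcover : (univ : Finset V) ⊆ univ.biUnion P := fun v _ ↦ by
    obtain ⟨i, hi, -⟩ := hmem v
    exact mem_biUnion.2 ⟨i, mem_univ _, hi⟩
  calc Fintype.card V = #(univ : Finset V) := card_univ.symm
    _ ≤ ∑ i, #(P i) := (card_le_card hcover).trans card_biUnion_le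
    _ ≤ ∑ _i : Fin n, k := sum_le_sum fun i _ ↦ hcard i
    _ = n * k := by simp

theorem IsNKGraph.sq_le_two_mul_card_edgeFinset_add [Fintype V] [DecidableRel G.Adj]
    (hG : G.IsNKGraph n k) : n ^ 2 ≤ 2 * #G.edgeFinset + n := by
  classical
  obtain ⟨P, -, -, hmem, hedge⟩ := hG
  choose part hpart using fun v ↦ (hmem v).exists
  have hsub : (univ : Finset (Fin n)).offDiag ⊆
      (univ.filter fun (x, y) ↦ G.Adj x y).image fun d ↦ (part d.1, part d.2) := by
    rintro ⟨i, j⟩ hij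
    obtain ⟨⟨a, b⟩, ⟨ha, hb, hab⟩, -⟩ := hedge i j (mem_offDiag.1 hij).2.2
    refine mem_image.2 ⟨(a, b), by simpa using hab, ?_⟩
    rw [(hmem a).unique (hpart a) ha, (hmem b).unique (hpart b) hb]
  have := (card_le_card hsub).trans card_image_le
  rw [offDiag_card, card_univ, Fintype.card_fin, ← two_mul_card_edgeFinset] at this
  rw [sq]
  omega

theorem IsNKGraph.existsNKGraphFree [Fintype V] {β : Type*} {H : SimpleGraph β}
    (hG : G.IsNKGraph n k) (hH : ¬ G.ContainsCopy H) : ExistsNKGraphFree n k H := by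
  classical
  let e := Fintype.equivFin V
  obtain ⟨P, hne, hcard, hmem, hedge⟩ := hG
  refine ⟨Fintype.card V, G.comap e.symm,
    ⟨fun i ↦ (P i).map e.toEmbedding, fun i ↦ (hne i).map,
      fun i ↦ (card_map _).trans_le (hcard i), fun v ↦ ?_, fun i j hij ↦ ?_⟩, ?_⟩
  · simpa [mem_map_equiv] using hmem (e.symm v)
  · refine ((Equiv.prodCongr e e).existsUnique_congr fun d ↦ ?_).1 (hedge i j hij)
    simp
  · rintro ⟨f, hf, hadj⟩
    exact hH ⟨e.symm ∘ f, e.symm.injective.comp hf, fun a b h ↦ hadj h⟩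

end NKGraph

/-- With blobs `{i} × α`, the vertex `(i, j)` is the end in blob `i` of the edge to blob `j`. -/
def swapGraph (α : Type*) : SimpleGraph (α × α) where
  Adj p q := p ≠ q ∧ q = p.swap
  symm := ⟨fun p q h ↦ ⟨h.1.symm, by rw [h.2, Prod.swap_swap]⟩⟩
  loopless := ⟨fun p h ↦ h.1 rfl⟩

theorem swapGraph_adj_unique {α : Type*} ⦃u v w : α × α⦄ (hu : (swapGraph α).Adj u w)
    (hv : (swapGraph α).Adj v w) : u = v := by
  rw [← Prod.swap_swap u, ← Prod.swap_swap v, ← hu.2, ← hv.2]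

theorem swapGraph_isNKGraph (n : ℕ) : (swapGraph (Fin n)).IsNKGraph n n := by
  refine ⟨fun i ↦ {i} ×ˢ univ, fun i ↦ ⟨(i, i), by simp⟩, fun i ↦ by simp,
    fun v ↦ ⟨v.1, by simp, fun j hj ↦ (mem_product.1 hj).1 |> mem_singleton.1 |>.symm⟩,
    fun i j hij ↦ ⟨((i, j), (j, i)), ?_, ?_⟩⟩
  · simp [swapGraph, hij]
  · rintro ⟨⟨a, b⟩, ⟨c, d⟩⟩ h
    simp_all [swapGraph]

end SimpleGraph

theorem eventually_mul_le_of_sq_sub_le {a c : ℝ} (ha : 0 ≤ a) (hac : a * c ^ 3 < 1) :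
    ∀ᶠ y : ℝ in atTop, ∀ k : ℝ, 0 ≤ k →
      (y ^ 3) ^ 2 - y ^ 3 ≤ y ^ 3 * k + √(a * (y ^ 3 * k) ^ 3) → c * y ≤ k := by
  rcases le_or_gt c 0 with hc | hc
  · filter_upwards [eventually_ge_atTop 0] with y hy k hk _
    nlinarith
  set θ := √(a * c ^ 3)
  have hθ : θ < 1 := (Real.sqrt_lt' one_pos).2 (by rwa [one_pow])
  filter_upwards [eventually_ge_atTop 1, eventually_gt_atTop ((1 + c) / (1 - θ))]
    with y hy1 hyA k hk h
  by_contra! hlt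
  have hk4 : y ^ 3 * k ≤ c * y ^ 4 := by nlinarith [pow_pos (by linarith : (0 : ℝ) < y) 3]
  have hroot : √(a * (y ^ 3 * k) ^ 3) ≤ θ * y ^ 6 := by
    calc √(a * (y ^ 3 * k) ^ 3) ≤ √(a * (c * y ^ 4) ^ 3) := by gcongr
      _ = θ * y ^ 6 := by
        rw [show a * (c * y ^ 4) ^ 3 = a * c ^ 3 * (y ^ 6) ^ 2 by ring,
          Real.sqrt_mul (by positivity), Real.sqrt_sq (by positivity)]
  have h1 : 1 + c < (1 - θ) * y := by rwa [div_lt_iff₀ (by linarith), mul_comm] at hyA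
  have hpoly : y ^ 3 + c * y ^ 4 < (1 - θ) * y ^ 6 := by
    have h3 : y ^ 3 ≤ y ^ 5 := pow_le_pow_right₀ hy1 (by norm_num)
    have h4 : y ^ 4 ≤ y ^ 5 := pow_le_pow_right₀ hy1 (by norm_num)
    calc y ^ 3 + c * y ^ 4 ≤ (1 + c) * y ^ 5 := by nlinarith
      _ < (1 - θ) * y * y ^ 5 := by gcongr
      _ = (1 - θ) * y ^ 6 := by ring
  nlinarith

theorem existsNKGraphFree_splitNumber {n k : ℕ} {β : Type*} {H : SimpleGraph β}
    (h : ExistsNKGraphFree n k H) : ExistsNKGraphFree n (splitNumber n H) H :=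
  Nat.sInf_mem (s := {k | ExistsNKGraphFree n k H}) ⟨k, h⟩

section CompleteBipartite

variable {n k t : ℕ}

theorem existsNKGraphFree_completeBipartiteGraph_self (ht : 0 < t) :
    ExistsNKGraphFree n n (completeBipartiteGraph (Fin 2) (Fin t)) :=
  (SimpleGraph.swapGraph_isNKGraph n).existsNKGraphFree
    (SimpleGraph.not_containsCopy_completeBipartiteGraph_of_adj_unique _ ht
      SimpleGraph.swapGraph_adj_unique)

theorem ExistsNKGraphFree.sq_sub_le (ht : 0 < t)
    (h : ExistsNKGraphFree n k (completeBipartiteGraph (Fin 2) (Fin t))) :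
    (n : ℝ) ^ 2 - n ≤ n * k + √((t - 1) * (n * k) ^ 3) := by
  classical
  obtain ⟨N, G, hG, hfree⟩ := h
  have hcommon : ∀ u w, u ≠ w → #(G.neighborFinset u ∩ G.neighborFinset w) ≤ t - 1 :=
    fun u w huw ↦ Nat.le_sub_one_of_lt (G.card_neighborFinset_inter_lt hfree huw)
  have hedges := G.two_mul_card_edgeFinset_le hcommon
  have hN : (Fintype.card (Fin N) : ℝ) ≤ n * k := by exact_mod_cast hG.card_le
  have hn : (n : ℝ) ^ 2 ≤ 2 * #G.edgeFinset + n := by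
    exact_mod_cast hG.sq_le_two_mul_card_edgeFinset_add
  have ht1 : (0 : ℝ) ≤ t - 1 := sub_nonneg.2 (Nat.one_le_cast.2 ht)
  rw [Nat.cast_pred ht] at hedges
  calc (n : ℝ) ^ 2 - n ≤ 2 * #G.edgeFinset := by linarith
    _ ≤ _ := hedges
    _ ≤ n * k + √((t - 1) * (n * k) ^ 3) := by gcongr

theorem sub_one_mul_pow_three_lt_one (ht : 0 < t) {c : ℝ}
    (hc : c < (t : ℝ) ^ (-(1 : ℝ) / 3)) :
    ((t : ℝ) - 1) * c ^ 3 < 1 := by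
  have htR : (0 : ℝ) < t := by exact_mod_cast ht
  have hcube : ((t : ℝ) ^ (-(1 : ℝ) / 3)) ^ 3 = (t : ℝ)⁻¹ := by
    rw [← Real.rpow_natCast, ← Real.rpow_mul htR.le]
    norm_num [Real.rpow_neg_one]
  have hc3 : c ^ 3 < (t : ℝ)⁻¹ := hcube ▸ Odd.strictMono_pow (by decide) hc
  calc ((t : ℝ) - 1) * c ^ 3 ≤ ((t : ℝ) - 1) * (t : ℝ)⁻¹ := by
        gcongr
        exact sub_nonneg.2 (Nat.one_le_cast.2 ht)
    _ < 1 := by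
        rw [sub_mul, mul_inv_cancel₀ htR.ne']
        linarith [inv_pos.2 htR]

theorem exists_mul_rpow_le_splitNumber (ht : 0 < t) {c : ℝ}
    (hc : c < (t : ℝ) ^ (-(1 : ℝ) / 3)) : ∃ n₀ : ℕ, ∀ n : ℕ, n₀ ≤ n →
      c * (n : ℝ) ^ ((1 : ℝ) / 3) ≤
        (splitNumber n (completeBipartiteGraph (Fin 2) (Fin t)) : ℝ) := by
  have hcbrt : Tendsto (fun n : ℕ ↦ (n : ℝ) ^ ((1 : ℝ) / 3)) atTop atTop :=
    (tendsto_rpow_atTop (by norm_num)).comp tendsto_natCast_atTop_atTop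
  obtain ⟨n₀, h⟩ := eventually_atTop.1 <| hcbrt.eventually <|
    eventually_mul_le_of_sq_sub_le (sub_nonneg.2 (Nat.one_le_cast.2 ht))
      (sub_one_mul_pow_three_lt_one ht hc)
  refine ⟨n₀, fun n hn ↦ h n hn _ (Nat.cast_nonneg _) ?_⟩
  have hcube : ((n : ℝ) ^ ((1 : ℝ) / 3)) ^ 3 = n := by
    rw [← Real.rpow_natCast, ← Real.rpow_mul (Nat.cast_nonneg n)]
    norm_num
  rw [hcube]
  exact (existsNKGraphFree_splitNumber
    (existsNKGraphFree_completeBipartiteGraph_self ht)).sq_sub_le ht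

end CompleteBipartite

/-- For `t ≥ 2` there is a constant `C > 0` with
`f(n, K_{2,t}) ≥ C n^(1/3)` for all large `n`; in particular one may take
`C = t^(-1/3) - o(1)`. -/
theorem splitNumber_K2t_lower (t : ℕ) (ht : 2 ≤ t) :
    (∃ C : ℝ, 0 < C ∧ ∃ n₀ : ℕ, ∀ n : ℕ, n₀ ≤ n →
      C * (n : ℝ) ^ ((1:ℝ)/3) ≤
        (splitNumber n (completeBipartiteGraph (Fin 2) (Fin t)) : ℝ)) ∧
    ∀ ε : ℝ, 0 < ε → ∃ n₀ : ℕ, ∀ n : ℕ, n₀ ≤ n →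
      ((t : ℝ) ^ (-(1:ℝ)/3) - ε) * (n : ℝ) ^ ((1:ℝ)/3) ≤
        (splitNumber n (completeBipartiteGraph (Fin 2) (Fin t)) : ℝ) := by
  have ht0 : 0 < t := by omega
  exact ⟨⟨_, by positivity,
      exists_mul_rpow_le_splitNumber ht0 (half_lt_self (by positivity))⟩,
    fun ε hε ↦ exists_mul_rpow_le_splitNumber ht0 (sub_lt_self _ hε)⟩
end

section
/- Let n ≥ 2 be an integer and let G be a simple graph with N vertices, M edges, and maximum degree Δ ≥ 1. If M ≥ 6·n²·log n and M² ≥ 36·n·N·Δ²·log n, then there exists a partition of the vertex set of G into n parts such that for any two distinct parts there is at least one edge of G with one endpoint in each part. -/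
open Finset Real SimpleGraph

theorem exp_neg_le_one_div_one_add {y : ℝ} (hy : 0 ≤ y) : exp (-y) ≤ 1 / (1 + y) := by
  rw [exp_neg, one_div]
  exact inv_anti₀ (by positivity) (by linarith [add_one_le_exp y])

theorem sub_one_div_pow_le_exp_neg {q : ℝ} (hq : 1 ≤ q) (d : ℕ) :
    ((q - 1) / q) ^ d ≤ exp (-(d / q)) := by
  have hq0 : 0 < q := by linarith
  calc ((q - 1) / q) ^ d = (1 - 1 / q) ^ d := by rw [sub_div, div_self hq0.ne']
    _ ≤ exp (-(1 / q)) ^ d := by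
        gcongr
        · rw [sub_nonneg, div_le_one hq0]; exact hq
        · exact one_sub_le_exp_neg _
    _ = exp (-(d / q)) := by rw [← exp_nat_mul]; ring_nf

theorem sub_two_mul_exp_add_two_mul_pow_mul_exp_le {q Δ : ℝ} {d : ℕ} (hq : 2 ≤ q)
    (hd : d ≤ Δ) :
    (q - 2) * exp (2 * d / (3 * q * (q + Δ)))
      + 2 * ((q - 1) / q) ^ d * exp (2 * (d + d * Δ) / (3 * q * (q + Δ))) ≤ q := by
  have hqΔ : 0 < q + Δ := by linarith
  set y : ℝ := d / (3 * q)
  set a : ℝ := 2 * d / (3 * q * (q + Δ))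
  have hy0 : 0 ≤ y := by positivity
  have ha0 : 0 ≤ a := by positivity
  have hay : a * (q + Δ) = 2 * y := by simp only [a, y]; field_simp
  have hqy : q * y ≤ Δ / 3 := by simp only [y]; field_simp; linarith
  have ha1 : a < 1 := by nlinarith
  have hfirst : exp a ≤ 1 / (1 - a) := exp_bound_div_one_sub_of_interval ha0 ha1
  have hsecond : ((q - 1) / q) ^ d * exp (2 * (d + d * Δ) / (3 * q * (q + Δ))) ≤ 1 / (1 + y) :=
    calc ((q - 1) / q) ^ d * exp (2 * (d + d * Δ) / (3 * q * (q + Δ)))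
        ≤ exp (-(d / q)) * exp (2 * y) := by
          gcongr
          · exact sub_one_div_pow_le_exp_neg (by linarith) d
          · simp only [y]
            rw [div_le_iff₀ (by positivity)]
            field_simp
            nlinarith
      _ = exp (-y) := by rw [← exp_add]; congr 1; simp only [y]; field_simp; ring
      _ ≤ 1 / (1 + y) := exp_neg_le_one_div_one_add hy0
  calc (q - 2) * exp a + 2 * ((q - 1) / q) ^ d * exp (2 * (d + d * Δ) / (3 * q * (q + Δ)))
      ≤ (q - 2) * (1 / (1 - a)) + 2 * (1 / (1 + y)) := by
        rw [mul_assoc 2]; gcongr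
    _ ≤ q := by
        rw [mul_one_div, mul_one_div, div_add_div _ _ (by linarith) (by linarith),
          div_le_iff₀ (by nlinarith)]
        -- `q(1 - a)(1 + y) - (q - 2)(1 + y) - 2(1 - a) = a(Δ + 2 - qy)`, using `a(q + Δ) = 2y`
        nlinarith [mul_nonneg ha0 (show 0 ≤ Δ + 2 - q * y by linarith)]

theorem exp_neg_div_le_exp_neg_div_mul_exp {a b k c : ℝ} (hc : 0 < c) (h : b ≤ a + k) :
    exp (-a / c) ≤ exp (-b / c) * exp (k / c) := by
  rw [← exp_add, ← add_div]
  gcongr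
  linarith

theorem sq_mul_exp_neg_lt_one {n N M Δ : ℝ} (hn : 2 ≤ n) (hΔ : 0 ≤ Δ) (hNΔ : 2 * M ≤ N * Δ)
    (h1 : 6 * n ^ 2 * log n ≤ M) (h2 : 36 * n * N * Δ ^ 2 * log n ≤ M ^ 2) :
    n ^ 2 * exp (-(2 * M) / (3 * n * (n + Δ))) < 1 := by
  have hn0 : 0 < n := by linarith
  have hlog : 0 < log n := log_pos (by linarith)
  have hM : 0 < M := lt_of_lt_of_le (by positivity) h1
  have hMΔ : 72 * n * Δ * log n ≤ M := by
    refine le_of_mul_le_mul_right ?_ hM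
    nlinarith [mul_le_mul_of_nonneg_left hNΔ (by positivity : 0 ≤ 36 * n * Δ * log n)]
  have hkey : log n * (3 * n * (n + Δ)) < M := by
    nlinarith [mul_pos (mul_pos hn0 hn0) hlog, mul_nonneg (mul_nonneg hn0.le hΔ) hlog.le]
  have hsq : n ^ 2 = exp (2 * log n) := by rw [mul_comm, exp_mul, exp_log hn0]; norm_cast
  rw [hsq, ← exp_add, exp_lt_one_iff, neg_div, ← sub_eq_add_neg, sub_neg,
    lt_div_iff₀ (by positivity)]
  linarith

section UpdateInvariant

variable {V α : Type*} [DecidableEq V] [Fintype α] [DecidableEq α]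

theorem card_filter_apply_mem_mul_card (A : Finset (V → α)) (v : V)
    (hA : ∀ χ ∈ A, ∀ x, Function.update χ v x ∈ A) (T : Finset α) :
    #{χ ∈ A | χ v ∈ T} * Fintype.card α = #A * #T := by
  have fiber_eq (c c' : α) : #{χ ∈ A | χ v = c} = #{χ ∈ A | χ v = c'} := by
    refine card_bij' (fun χ _ => Function.update χ v c') (fun χ _ => Function.update χ v c)
      ?_ ?_ ?_ ?_ <;> intro χ hχ <;> rw [mem_filter] at hχ
    · exact mem_filter.mpr ⟨hA χ hχ.1 c', by simp⟩
    · exact mem_filter.mpr ⟨hA χ hχ.1 c, by simp⟩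
    · simp [← hχ.2]
    · simp [← hχ.2]
  calc #{χ ∈ A | χ v ∈ T} * Fintype.card α
      = ∑ c ∈ T, ∑ c' : α, #{χ ∈ A | χ v = c'} := by
        rw [← sum_card_fiberwise_eq_card_filter, sum_mul]
        refine sum_congr rfl fun c _ => ?_
        rw [sum_congr rfl fun c' _ => fiber_eq c' c, sum_const, card_univ, smul_eq_mul,
          mul_comm]
    _ = #A * #T := by
        rw [sum_card_fiberwise_eq_card_filter, filter_true_of_mem fun _ _ => mem_univ _,
          sum_const, smul_eq_mul, mul_comm]

theorem card_filter_forall_mem_mul_card_pow (A : Finset (V → α)) (F : Finset V)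
    (hA : ∀ χ ∈ A, ∀ v ∈ F, ∀ x, Function.update χ v x ∈ A) (T : V → Finset α) :
    #{χ ∈ A | ∀ v ∈ F, χ v ∈ T v} * Fintype.card α ^ #F = #A * ∏ v ∈ F, #(T v) := by
  induction F using Finset.induction_on with
  | empty => simp
  | @insert w F hw ih =>
    set A' := {χ ∈ A | ∀ v ∈ F, χ v ∈ T v}
    have hA' : ∀ χ ∈ A', ∀ x, Function.update χ w x ∈ A' := by
      intro χ hχ x
      rw [mem_filter] at hχ ⊢
      refine ⟨hA χ hχ.1 w (mem_insert_self w F) x, fun v hv => ?_⟩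
      rw [Function.update_of_ne (ne_of_mem_of_not_mem hv hw)]
      exact hχ.2 v hv
    have hsplit : {χ ∈ A | ∀ v ∈ insert w F, χ v ∈ T v} = {χ ∈ A' | χ w ∈ T w} := by
      rw [filter_filter]
      exact filter_congr fun χ _ => by rw [forall_mem_insert, and_comm]
    rw [hsplit, card_insert_of_notMem hw, prod_insert hw, pow_succ, ← mul_assoc,
      mul_right_comm, card_filter_apply_mem_mul_card A' w hA', mul_right_comm,
      ih fun χ hχ v hv => hA χ hχ v (mem_insert_of_mem hv)]
    ring

end UpdateInvariant

namespace SimpleGraph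

variable {V α : Type*} {G : SimpleGraph V} [DecidableRel G.Adj]

variable (G) in
def dartCountOn (s : Finset V) : ℕ := ∑ u ∈ s, ∑ w ∈ s, if G.Adj u w then 1 else 0

variable (G) in
theorem dartCountOn_univ [Fintype V] : G.dartCountOn univ = 2 * #G.edgeFinset := by
  rw [← sum_degrees_eq_twice_card_edges]
  refine sum_congr rfl fun v _ => ?_
  rw [sum_boole, ← card_neighborFinset_eq_degree]
  simp [neighborFinset_eq_filter]

theorem card_filter_adj_le_degree [Fintype V] (s : Finset V) (v : V) :
    #{u ∈ s | G.Adj v u} ≤ G.degree v :=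
  (card_le_card fun u hu => (mem_neighborFinset G v u).mpr (mem_filter.mp hu).2).trans_eq
    (card_neighborFinset_eq_degree G v)

variable [DecidableEq V] {s t : Finset V} {v : V}

theorem dartCountOn_le_add (ht : t ⊆ s) :
    G.dartCountOn s ≤ G.dartCountOn t + 2 * ∑ w ∈ s \ t, #{u ∈ s | G.Adj w u} := by
  set a : V → V → ℕ := fun u w => if G.Adj u w then 1 else 0
  have ha_symm (u w : V) : a u w = a w u := by simp only [a, G.adj_comm]
  have hrows : ∑ u ∈ t, ∑ w ∈ s \ t, a u w ≤ ∑ w ∈ s \ t, ∑ u ∈ s, a w u := by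
    rw [sum_comm]
    refine sum_le_sum fun w _ => ?_
    simp only [ha_symm _ w]
    exact sum_le_sum_of_subset ht
  have hcard (w : V) : #{u ∈ s | G.Adj w u} = ∑ u ∈ s, a w u := by
    simp only [a, sum_boole, Nat.cast_id]
  calc G.dartCountOn s
      = G.dartCountOn t + ∑ u ∈ t, ∑ w ∈ s \ t, a u w
          + ∑ w ∈ s \ t, ∑ u ∈ s, a w u := by
        simp only [dartCountOn, ← sum_sdiff ht, sum_add_distrib]
        ring
    _ ≤ _ := by simp only [hcard]; omega

theorem dartCountOn_le_erase_add (hv : v ∈ s) :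
    G.dartCountOn s ≤ G.dartCountOn (s.erase v) + 2 * #{u ∈ s | G.Adj v u} := by
  simpa [sdiff_erase_self hv] using dartCountOn_le_add (G := G) (erase_subset v s)

variable [Fintype V]

theorem dartCountOn_le_sdiff_neighbors_add {Δ : ℕ} (hdeg : ∀ v, G.degree v ≤ Δ)
    (hv : v ∈ s) :
    G.dartCountOn s ≤ G.dartCountOn (s \ insert v {u ∈ s | G.Adj v u})
      + 2 * (#{u ∈ s | G.Adj v u} + #{u ∈ s | G.Adj v u} * Δ) := by
  set D := {u ∈ s | G.Adj v u}
  have hvD : v ∉ D := by simp [D]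
  have hsub : insert v D ⊆ s := insert_subset hv (filter_subset _ s)
  have hD : ∑ w ∈ D, #{u ∈ s | G.Adj w u} ≤ #D * Δ := by
    refine (sum_le_sum fun w _ => ?_).trans_eq (by rw [sum_const, smul_eq_mul])
    exact (card_filter_adj_le_degree s w).trans (hdeg w)
  have := dartCountOn_le_add (G := G) (sdiff_subset (s := s) (t := insert v D))
  rw [Finset.sdiff_sdiff_eq_self hsub, sum_insert hvD] at this
  exact this.trans (Nat.add_le_add_left (Nat.mul_le_mul_left 2 (Nat.add_le_add_left hD _)) _)

variable [Fintype α] [DecidableEq α] {i j : α}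

variable (G) in
def pairFreeColorings (i j : α) (s : Finset V) : Finset (V → α) :=
  {χ | ∀ u ∈ s, ∀ w ∈ s, G.Adj u w → χ u = i → χ w ≠ j}

theorem mem_pairFreeColorings {χ : V → α} :
    χ ∈ G.pairFreeColorings i j s ↔ ∀ u ∈ s, ∀ w ∈ s, G.Adj u w → χ u = i → χ w ≠ j := by
  simp [pairFreeColorings]

theorem pairFreeColorings_comm : G.pairFreeColorings i j s = G.pairFreeColorings j i s := by
  ext χ
  simp only [mem_pairFreeColorings]
  exact ⟨fun h u hu w hw huw hu' hw' => h w hw u hu huw.symm hw' hu',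
    fun h u hu w hw huw hu' hw' => h w hw u hu huw.symm hw' hu'⟩

theorem pairFreeColorings_anti (ht : t ⊆ s) :
    G.pairFreeColorings i j s ⊆ G.pairFreeColorings i j t := fun χ hχ => by
  rw [mem_pairFreeColorings] at hχ ⊢
  exact fun u hu w hw => hχ u (ht hu) w (ht hw)

theorem update_mem_pairFreeColorings (hv : v ∉ s) {χ : V → α}
    (hχ : χ ∈ G.pairFreeColorings i j s) (x : α) :
    Function.update χ v x ∈ G.pairFreeColorings i j s := by
  rw [mem_pairFreeColorings] at hχ ⊢
  intro u hu w hw huw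
  rw [Function.update_of_ne (ne_of_mem_of_not_mem hu hv),
    Function.update_of_ne (ne_of_mem_of_not_mem hw hv)]
  exact hχ u hu w hw huw

theorem card_filter_apply_mem_compl_mul_le (v : V) :
    #{χ ∈ G.pairFreeColorings i j s | χ v ∈ ({i, j} : Finset α)ᶜ} * Fintype.card α
      ≤ #(G.pairFreeColorings i j (s.erase v)) * #({i, j} : Finset α)ᶜ := by
  rw [← card_filter_apply_mem_mul_card _ v
    (fun χ hχ => update_mem_pairFreeColorings (notMem_erase v s) hχ)]
  gcongr
  exact pairFreeColorings_anti (erase_subset v s)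

theorem card_filter_apply_eq_mul_le (hv : v ∈ s) :
    #{χ ∈ G.pairFreeColorings i j s | χ v = i} * Fintype.card α ^ (#{u ∈ s | G.Adj v u} + 1)
      ≤ #(G.pairFreeColorings i j (s \ insert v {u ∈ s | G.Adj v u}))
        * (Fintype.card α - 1) ^ #{u ∈ s | G.Adj v u} := by
  set D := {u ∈ s | G.Adj v u}
  set t := s \ insert v D
  have hvD : v ∉ D := by simp [D]
  let T : V → Finset α := fun u => if u = v then {i} else {j}ᶜ
  have hsub : {χ ∈ G.pairFreeColorings i j s | χ v = i}
      ⊆ {χ ∈ G.pairFreeColorings i j t | ∀ u ∈ insert v D, χ u ∈ T u} := by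
    intro χ hχ
    obtain ⟨hχ, hχv⟩ := mem_filter.mp hχ
    refine mem_filter.mpr ⟨pairFreeColorings_anti sdiff_subset hχ, ?_⟩
    rw [forall_mem_insert]
    refine ⟨by simp [T, hχv], fun u hu => ?_⟩
    obtain ⟨hus, hvu⟩ := mem_filter.mp hu
    simp only [T, ne_of_mem_of_not_mem hu hvD, if_false, mem_compl, mem_singleton]
    exact mem_pairFreeColorings.mp hχ v hv u hus hvu hχv
  have hprod : ∏ u ∈ insert v D, #(T u) = (Fintype.card α - 1) ^ #D := by
    have hT (u : V) (hu : u ∈ D) : #(T u) = Fintype.card α - 1 := by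
      simp [T, ne_of_mem_of_not_mem hu hvD, card_compl]
    rw [prod_insert hvD, prod_congr rfl hT]
    simp [T]
  rw [← hprod, ← card_filter_forall_mem_mul_card_pow _ _
    (fun χ hχ u hu => update_mem_pairFreeColorings (fun hut => (mem_sdiff.mp hut).2 hu) hχ),
    card_insert_of_notMem hvD]
  exact Nat.mul_le_mul_right _ (card_le_card (by convert hsub))

theorem card_pairFreeColorings_mul_le (hij : i ≠ j) (hv : v ∈ s) :
    #(G.pairFreeColorings i j s) * Fintype.card α ^ (#{u ∈ s | G.Adj v u} + 1)
      ≤ (Fintype.card α - 2) * Fintype.card α ^ #{u ∈ s | G.Adj v u}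
          * #(G.pairFreeColorings i j (s.erase v))
        + 2 * (Fintype.card α - 1) ^ #{u ∈ s | G.Adj v u}
          * #(G.pairFreeColorings i j (s \ insert v {u ∈ s | G.Adj v u})) := by
  have hX := card_filter_apply_mem_compl_mul_le (G := G) (i := i) (j := j) (s := s) v
  rw [card_compl, card_pair hij] at hX
  have hYi := card_filter_apply_eq_mul_le (G := G) (i := i) (j := j) hv
  have hYj := card_filter_apply_eq_mul_le (G := G) (i := j) (j := i) hv
  rw [pairFreeColorings_comm (i := j), pairFreeColorings_comm (i := j)] at hYj
  set q := Fintype.card α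
  set d := #{u ∈ s | G.Adj v u}
  set P := G.pairFreeColorings i j s
  set X := {χ ∈ P | χ v ∈ ({i, j} : Finset α)ᶜ}
  set Yi := {χ ∈ P | χ v = i}
  set Yj := {χ ∈ P | χ v = j}
  have hcover : #P ≤ #X + #Yi + #Yj := by
    refine (card_le_card fun χ hχ => ?_).trans
      ((card_union_le _ _).trans (Nat.add_le_add_right (card_union_le _ _) _))
    by_cases hi : χ v = i
    · simp [Yi, hχ, hi]
    by_cases hj : χ v = j
    · simp [Yj, hχ, hj]
    · simp [X, hχ, hi, hj]
  calc #P * q ^ (d + 1) ≤ (#X + #Yi + #Yj) * q ^ (d + 1) := Nat.mul_le_mul_right _ hcover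
    _ = #X * q * q ^ d + #Yi * q ^ (d + 1) + #Yj * q ^ (d + 1) := by ring
    _ ≤ _ := by
        have := Nat.mul_le_mul_right (q ^ d) hX
        linarith

/-- The constant `3q(q + Δ)` is what makes the recursion `card_pairFreeColorings_mul_le` close,
by `sub_two_mul_exp_add_two_mul_pow_mul_exp_le`. -/
theorem card_pairFreeColorings_le (hq : 2 ≤ Fintype.card α) (hij : i ≠ j) {Δ : ℕ}
    (hdeg : ∀ v, G.degree v ≤ Δ) (s : Finset V) :
    (#(G.pairFreeColorings i j s) : ℝ) ≤ (Fintype.card α : ℝ) ^ Fintype.card V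
      * exp (-(G.dartCountOn s) / (3 * Fintype.card α * (Fintype.card α + Δ))) := by
  set q := Fintype.card α
  set c : ℝ := 3 * q * (q + Δ)
  have hq' : (2 : ℝ) ≤ q := by exact_mod_cast hq
  have hc : 0 < c := by positivity
  induction s using Finset.strongInduction with | H s ih =>
  rcases s.eq_empty_or_nonempty with rfl | ⟨v, hv⟩
  · have : #(G.pairFreeColorings i j ∅) ≤ q ^ Fintype.card V := by
      simpa [q] using card_le_univ (G.pairFreeColorings i j ∅)
    simpa [dartCountOn] using (Nat.cast_le (α := ℝ)).mpr this
  set d := #{u ∈ s | G.Adj v u}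
  set K : ℝ := q ^ Fintype.card V
  set E := exp (-(G.dartCountOn s) / c)
  have hd : d ≤ Δ := (card_filter_adj_le_degree s v).trans (hdeg v)
  have herase : (#(G.pairFreeColorings i j (s.erase v)) : ℝ) ≤ K * (E * exp (2 * d / c)) :=
    (ih _ (erase_ssubset hv)).trans <| mul_le_mul_of_nonneg_left
      (exp_neg_div_le_exp_neg_div_mul_exp hc (by exact_mod_cast dartCountOn_le_erase_add hv))
      (by positivity)
  have hsdiff : (#(G.pairFreeColorings i j (s \ insert v {u ∈ s | G.Adj v u})) : ℝ)
      ≤ K * (E * exp (2 * (d + d * Δ) / c)) :=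
    (ih _ (sdiff_ssubset (insert_subset hv (filter_subset _ s)) (insert_nonempty v _))).trans <|
      mul_le_mul_of_nonneg_left (exp_neg_div_le_exp_neg_div_mul_exp hc
        (by exact_mod_cast dartCountOn_le_sdiff_neighbors_add hdeg hv)) (by positivity)
  have hstep : (#(G.pairFreeColorings i j s) : ℝ) * q ^ (d + 1)
      ≤ (q - 2) * q ^ d * #(G.pairFreeColorings i j (s.erase v))
        + 2 * (q - 1) ^ d * #(G.pairFreeColorings i j (s \ insert v {u ∈ s | G.Adj v u})) := by
    have hnat : #(G.pairFreeColorings i j s) * q ^ (d + 1)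
        ≤ (q - 2) * q ^ d * #(G.pairFreeColorings i j (s.erase v))
          + 2 * (q - 1) ^ d * #(G.pairFreeColorings i j (s \ insert v {u ∈ s | G.Adj v u})) :=
      card_pairFreeColorings_mul_le hij hv
    have := (Nat.cast_le (α := ℝ)).mpr hnat
    push_cast [Nat.cast_sub hq, Nat.cast_sub (one_le_two.trans hq)] at this
    exact this
  have hbracket := sub_two_mul_exp_add_two_mul_pow_mul_exp_le hq' (show (d : ℝ) ≤ Δ by
    exact_mod_cast hd)
  refine le_of_mul_le_mul_right (hstep.trans ?_) (by positivity : (0 : ℝ) < q ^ (d + 1))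
  have hq2 : (0 : ℝ) ≤ q - 2 := by linarith
  have hq1 : (0 : ℝ) ≤ q - 1 := by linarith
  calc (q - 2) * q ^ d * #(G.pairFreeColorings i j (s.erase v))
        + 2 * (q - 1) ^ d * #(G.pairFreeColorings i j (s \ insert v {u ∈ s | G.Adj v u}))
      ≤ (q - 2) * q ^ d * (K * (E * exp (2 * d / c)))
        + 2 * (q - 1) ^ d * (K * (E * exp (2 * (d + d * Δ) / c))) := by gcongr
    _ = K * E * q ^ d * ((q - 2) * exp (2 * d / c)
        + 2 * ((q - 1) / q) ^ d * exp (2 * (d + d * Δ) / c)) := by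
        rw [div_pow]; field_simp
    _ ≤ K * E * q ^ d * q := by gcongr
    _ = K * E * q ^ (d + 1) := by ring

theorem exists_coloring_forall_ne_exists_adj (hq : 2 ≤ Fintype.card α) {Δ : ℕ}
    (hdeg : ∀ v, G.degree v ≤ Δ)
    (h : (Fintype.card α : ℝ) ^ 2
      * exp (-(G.dartCountOn univ) / (3 * Fintype.card α * (Fintype.card α + Δ))) < 1) :
    ∃ χ : V → α, ∀ i j, i ≠ j → ∃ u w, G.Adj u w ∧ χ u = i ∧ χ w = j := by
  set q := Fintype.card α
  set bound : ℝ := (q : ℝ) ^ Fintype.card V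
    * exp (-(G.dartCountOn univ) / (3 * q * (q + Δ)))
  set bad := (univ : Finset α).offDiag.biUnion fun p => G.pairFreeColorings p.1 p.2 univ
  have hbad : (#bad : ℝ) < Fintype.card (V → α) := by
    calc (#bad : ℝ)
        ≤ ∑ p ∈ (univ : Finset α).offDiag, (#(G.pairFreeColorings p.1 p.2 univ) : ℝ) := by
          exact_mod_cast card_biUnion_le
      _ ≤ ∑ p ∈ (univ : Finset α).offDiag, bound :=
          sum_le_sum fun p hp => card_pairFreeColorings_le hq (mem_offDiag.mp hp).2.2 hdeg univ
      _ ≤ q ^ 2 * bound := by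
          rw [sum_const, nsmul_eq_mul]
          gcongr
          exact_mod_cast (offDiag_card univ).trans_le ((Nat.sub_le _ _).trans_eq (sq q).symm)
      _ < Fintype.card (V → α) := by
          rw [Fintype.card_fun, Nat.cast_pow, ← mul_assoc, mul_comm _ ((q : ℝ) ^ _), mul_assoc]
          exact mul_lt_of_lt_one_right (by positivity) h
  obtain ⟨χ, -, hχ⟩ := exists_mem_notMem_of_card_lt_card (s := bad) (t := univ)
    (by exact_mod_cast hbad)
  refine ⟨χ, fun i j hij => ?_⟩
  have : χ ∉ G.pairFreeColorings i j univ := fun hmem =>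
    hχ (mem_biUnion.mpr ⟨(i, j), by simpa using hij, hmem⟩)
  simp only [mem_pairFreeColorings, not_forall, not_not] at this
  obtain ⟨u, -, w, -, huw, hu, hw⟩ := this
  exact ⟨u, w, huw, hu, hw⟩

end SimpleGraph

theorem exists_partition_with_crossing_edges_general {V : Type*} [Fintype V] (G : SimpleGraph V)
    (n N M Δ : ℕ) (hn : 2 ≤ n)
    (hN : Fintype.card V = N) (hM : G.edgeSet.ncard = M)
    (hΔub : ∀ v : V, (G.neighborSet v).ncard ≤ Δ)
    (h1 : 6 * (n : ℝ) ^ 2 * Real.log n ≤ (M : ℝ))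
    (h2 : 36 * (n : ℝ) * (N : ℝ) * (Δ : ℝ) ^ 2 * Real.log n ≤ (M : ℝ) ^ 2) :
    ∃ P : Fin n → Finset V,
      (∀ v : V, ∃! i, v ∈ P i) ∧
      ∀ i j, i ≠ j → ∃ u ∈ P i, ∃ w ∈ P j, G.Adj u w := by
  classical
  have hdeg (v : V) : G.degree v ≤ Δ := by
    rw [← card_neighborSet_eq_degree, ← Nat.card_eq_fintype_card, Nat.card_coe_set_eq]
    exact hΔub v
  have hdarts : G.dartCountOn univ = 2 * M := by
    rw [G.dartCountOn_univ, ← hM, ← Nat.card_coe_set_eq, Nat.card_eq_fintype_card,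
      edgeFinset_card]
  have hNΔ : 2 * M ≤ N * Δ := by
    rw [← hdarts, dartCountOn_univ, ← sum_degrees_eq_twice_card_edges, ← hN, ← card_univ,
      ← smul_eq_mul, ← sum_const]
    exact sum_le_sum fun v _ => hdeg v
  obtain ⟨χ, hχ⟩ := G.exists_coloring_forall_ne_exists_adj (α := Fin n) (by simpa) hdeg (by
    rw [hdarts, Fintype.card_fin]
    push_cast
    exact sq_mul_exp_neg_lt_one (by exact_mod_cast hn) (by positivity) (by exact_mod_cast hNΔ)
      h1 h2)
  refine ⟨fun i => {v | χ v = i},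
    fun v => ⟨χ v, by simp, fun i hi => by simpa [eq_comm] using hi⟩, fun i j hij => ?_⟩
  obtain ⟨u, w, huw, rfl, rfl⟩ := hχ i j hij
  exact ⟨u, by simp, w, by simp, huw⟩

/-- Let `n ≥ 2` and let `G` be a graph with `N` vertices, `M` edges and
maximum degree `Δ ≥ 1`. If `M ≥ 6 n² log n` and `M² ≥ 36 n N Δ² log n`, then the vertex
set of `G` can be partitioned into `n` parts so that between any two distinct parts there
is an edge of `G`. -/
theorem exists_partition_with_crossing_edges {V : Type*} [Fintype V] (G : SimpleGraph V)
    (n N M Δ : ℕ) (hn : 2 ≤ n)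
    (hN : Fintype.card V = N) (hM : G.edgeSet.ncard = M)
    (hΔub : ∀ v : V, (G.neighborSet v).ncard ≤ Δ)
    (hΔmax : ∃ v : V, (G.neighborSet v).ncard = Δ) (hΔ : 1 ≤ Δ)
    (h1 : 6 * (n : ℝ) ^ 2 * Real.log n ≤ (M : ℝ))
    (h2 : 36 * (n : ℝ) * (N : ℝ) * (Δ : ℝ) ^ 2 * Real.log n ≤ (M : ℝ) ^ 2) :
    ∃ P : Fin n → Finset V,
      (∀ v : V, ∃! i, v ∈ P i) ∧
      ∀ i j, i ≠ j → ∃ u ∈ P i, ∃ w ∈ P j, G.Adj u w :=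
  exists_partition_with_crossing_edges_general G n N M Δ hn hN hM hΔub h1 h2
end
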